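/- arXiv:1609.03758 — 3 statements merged into one kernel-verified Lean document; each statement's English description precedes it below -/
import Mathlib

section
/- Let the D×D matrices F (quantum Fisher information) and G (weight matrix) be defined blockwise as follows, for a rank-r state ρ = Diag(λ₁,…,λ_r,0,…,0) with r > 1 and λ_i > 0: the diagonal–diagonal block has F^{dd}_{aa} = 1/λ_{r_a} + 1/λ_1 and F^{dd}_{ab} = 1/λ_1 for a ≠ b (indices with rows 2 ≤ r_a ≤ r); the real–real and imaginary–imaginary blocks are diagonal with F^{rr/ii}_{aa} = 4/(λ_{r_a} + λ_{c_a}) when the column index satisfies r_a < c_a ≤ r, and F^{rr/ii}_{aa} = 4/λ_{r_a} when c_a > r; all other blocks are zero. Likewise G^{dd}_{ab} = 1 + δ_{ab}, G^{rr} = G^{ii} = 2·Id, other blocks zero. Then F ≤ (2/λ_min(ρ))·G in the Loewner order, where λ_min(ρ) := min_{1 ≤ i ≤ r} λ_i; equivalently, the largest eigenvalue of G^{-1/2} F G^{-1/2} is at most 2/λ_min(ρ). -/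
open Matrix
noncomputable section

/-- Indices of the diagonal parameters `ρ_{22}, …, ρ_{rr}` (0-indexed rows `1,…,r−1`). -/
abbrev DiagIdx (d r : ℕ) := {j : Fin d // 0 < (j : ℕ) ∧ (j : ℕ) < r}

/-- Indices of the off-diagonal parameters `ρ_{jk}`, `1 ≤ j ≤ r`, `j < k ≤ d`
(0-indexed: `j < r`, `j < k`). -/
abbrev OffIdx (d r : ℕ) := {p : Fin d × Fin d // (p.1 : ℕ) < r ∧ p.1 < p.2}

/-- The index set of the `D = 2rd − r² − 1` local parameters of rank-r states. -/
abbrev ParamIdx (d r : ℕ) := (DiagIdx d r ⊕ OffIdx d r) ⊕ OffIdx d r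

/-- Extension of the eigenvalue list to all of `Fin d` (zero beyond position `r`). -/
def lamOf {d r : ℕ} (lam : Fin r → ℝ) (j : Fin d) : ℝ :=
  if h : (j : ℕ) < r then lam ⟨j, h⟩ else 0

/-- The quantum Fisher information matrix `F` at `ρ = Diag(λ₁,…,λ_r,0,…,0)`, defined
blockwise: `F^{dd}_{aa} = 1/λ_{r_a} + 1/λ₁`, `F^{dd}_{ab} = 1/λ₁` (`a ≠ b`);
`F^{rr/ii}` diagonal with `F_{aa} = 4/(λ_{r_a} + λ_{c_a})` if `c_a ≤ r` and `4/λ_{r_a}`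
if `c_a > r`; all other blocks zero. -/
def Fquantum (d r : ℕ) (hr : 0 < r) (lam : Fin r → ℝ) :
    Matrix (ParamIdx d r) (ParamIdx d r) ℝ :=
  Matrix.of fun a b =>
    match a, b with
    | Sum.inl (Sum.inl j), Sum.inl (Sum.inl j') =>
        if j = j' then 1 / lamOf lam j.1 + 1 / lam ⟨0, hr⟩ else 1 / lam ⟨0, hr⟩
    | Sum.inl (Sum.inr p), Sum.inl (Sum.inr p') =>
        if p = p' then
          (if (p.1.2 : ℕ) < r then 4 / (lamOf lam p.1.1 + lamOf lam p.1.2)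
           else 4 / lamOf lam p.1.1)
        else 0
    | Sum.inr p, Sum.inr p' =>
        if p = p' then
          (if (p.1.2 : ℕ) < r then 4 / (lamOf lam p.1.1 + lamOf lam p.1.2)
           else 4 / lamOf lam p.1.1)
        else 0
    | _, _ => 0

/-- The weight matrix `G`, defined blockwise: `G^{dd}_{ab} = 1 + δ_{ab}`,
`G^{rr} = G^{ii} = 2·Id`, all other blocks zero. -/
def Gweight (d r : ℕ) : Matrix (ParamIdx d r) (ParamIdx d r) ℝ :=
  Matrix.of fun a b =>
    match a, b with
    | Sum.inl (Sum.inl j), Sum.inl (Sum.inl j') => if j = j' then 2 else 1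
    | Sum.inl (Sum.inr p), Sum.inl (Sum.inr p') => if p = p' then 2 else 0
    | Sum.inr p, Sum.inr p' => if p = p' then 2 else 0
    | _, _ => 0

/-!
Both matrices are a rank-one block plus a diagonal: with `v` the indicator of the diagonal
parameters, `G = v vᵀ + diag(1, 2, 2)` and `F = λ₁⁻¹ v vᵀ + diag(λ_{r_a}⁻¹, f, f)`, where `f` lists
the off-diagonal Fisher entries. Hence `(2/λ_min) G - F` is `(2/λ_min - λ₁⁻¹) v vᵀ` plus a
diagonal matrix, and every coefficient is nonnegative because `λ_min` bounds each `λ_i` and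
`λ_j + λ_k` from below.
-/

theorem one_div_le_two_div_of_le {x l : ℝ} (hl : 0 < l) (h : l ≤ x) : 1 / x ≤ 2 / l :=
  calc 1 / x ≤ 1 / l := one_div_le_one_div_of_le hl h
    _ ≤ 2 / l := div_le_div_of_nonneg_right (by norm_num) hl.le

theorem Matrix.posSemidef_smul_vecMulVec_self_add_diagonal {n : Type*} [Fintype n]
    [DecidableEq n] (v e : n → ℝ) {c : ℝ} (hc : 0 ≤ c) (he : 0 ≤ e) :
    (c • vecMulVec v v + diagonal e).PosSemidef := by
  simpa using ((posSemidef_vecMulVec_self_star v).smul hc).add (PosSemidef.diagonal he)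

section

variable {d r : ℕ}

theorem lamOf_of_lt (lam : Fin r → ℝ) {j : Fin d} (hj : (j : ℕ) < r) :
    lamOf lam j = lam ⟨j, hj⟩ := dif_pos hj

def diagParamIndicator (d r : ℕ) : ParamIdx d r → ℝ := Sum.elim (Sum.elim 1 0) 0

def weightDiag (d r : ℕ) : ParamIdx d r → ℝ := Sum.elim (Sum.elim 1 2) 2

def offFisherEntry (lam : Fin r → ℝ) (p : OffIdx d r) : ℝ :=
  if (p.1.2 : ℕ) < r then 4 / (lamOf lam p.1.1 + lamOf lam p.1.2) else 4 / lamOf lam p.1.1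

def fisherDiag (lam : Fin r → ℝ) : ParamIdx d r → ℝ :=
  Sum.elim (Sum.elim (fun j => 1 / lamOf lam j.1) (offFisherEntry lam)) (offFisherEntry lam)

theorem Gweight_eq_vecMulVec_add_diagonal :
    Gweight d r = vecMulVec (diagParamIndicator d r) (diagParamIndicator d r) +
      diagonal (weightDiag d r) := by
  ext ((j | p) | p) ((j' | p') | p') <;>
    simp [Gweight, diagParamIndicator, weightDiag, vecMulVec_apply, diagonal_apply, add_ite,
      one_add_one_eq_two]

theorem Fquantum_eq_smul_vecMulVec_add_diagonal (hr : 0 < r) (lam : Fin r → ℝ) :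
    Fquantum d r hr lam = (1 / lam ⟨0, hr⟩) •
      vecMulVec (diagParamIndicator d r) (diagParamIndicator d r) + diagonal (fisherDiag lam) := by
  ext ((j | p) | p) ((j' | p') | p') <;>
    simp [Fquantum, diagParamIndicator, fisherDiag, offFisherEntry, vecMulVec_apply, diagonal_apply,
      add_ite, add_comm]

variable {lam : Fin r → ℝ} {lmin : ℝ}

theorem offFisherEntry_le (hpos : ∀ i, 0 < lam i) (hlb : ∀ i, lmin ≤ lam i) (hlmin : 0 < lmin)
    (p : OffIdx d r) : offFisherEntry lam p ≤ 4 / lmin := by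
  have hrow : lmin ≤ lamOf lam p.1.1 := lamOf_of_lt lam p.2.1 ▸ hlb _
  unfold offFisherEntry
  split_ifs with hcol
  · have hcol_pos : 0 < lamOf lam p.1.2 := lamOf_of_lt lam hcol ▸ hpos _
    gcongr
    linarith
  · gcongr

theorem fisherDiag_le (hpos : ∀ i, 0 < lam i) (hlb : ∀ i, lmin ≤ lam i) (hlmin : 0 < lmin)
    (a : ParamIdx d r) : fisherDiag lam a ≤ 2 / lmin * weightDiag d r a := by
  rcases a with (j | p) | p
  · rw [weightDiag, Sum.elim_inl, Sum.elim_inl, Pi.one_apply, mul_one]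
    exact one_div_le_two_div_of_le hlmin (lamOf_of_lt lam j.2.2 ▸ hlb _)
  all_goals
    calc offFisherEntry lam p ≤ 4 / lmin := offFisherEntry_le hpos hlb hlmin p
      _ = 2 / lmin * 2 := by ring

end

theorem quantum_fisher_le_weight_general (d r : ℕ) (hr : 0 < r)
    (lam : Fin r → ℝ) (hpos : ∀ i, 0 < lam i)
    (lmin : ℝ) (hlb : ∀ i, lmin ≤ lam i) (hmem : ∃ i, lam i = lmin) :
    ((2 / lmin) • Gweight d r - Fquantum d r hr lam).PosSemidef := by
  obtain ⟨i₀, hi₀⟩ := hmem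
  have hlmin : 0 < lmin := hi₀ ▸ hpos i₀
  have hM : (2 / lmin) • Gweight d r - Fquantum d r hr lam =
      (2 / lmin - 1 / lam ⟨0, hr⟩) • vecMulVec (diagParamIndicator d r) (diagParamIndicator d r) +
        diagonal ((2 / lmin) • weightDiag d r - fisherDiag lam) := by
    rw [Gweight_eq_vecMulVec_add_diagonal, Fquantum_eq_smul_vecMulVec_add_diagonal,
      Pi.sub_def, ← diagonal_sub, diagonal_smul]
    module
  rw [hM]
  exact posSemidef_smul_vecMulVec_self_add_diagonal _ _
    (sub_nonneg.2 (one_div_le_two_div_of_le hlmin (hlb _)))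
    fun a => sub_nonneg.2 (fisherDiag_le hpos hlb hlmin a)

/-- the quantum Fisher information `F` satisfies `F ≤ (2/λ_min(ρ))·G` in the
Loewner order (equivalently, `λ_max(G^{-1/2} F G^{-1/2}) ≤ 2/λ_min(ρ)`). -/
theorem quantum_fisher_le_weight (d r : ℕ) (hd : 2 ≤ d) (hr1 : 1 < r) (hr : 0 < r)
    (hrd : r ≤ d) (lam : Fin r → ℝ) (hpos : ∀ i, 0 < lam i) (hsum : ∑ i, lam i = 1)
    (lmin : ℝ) (hlb : ∀ i, lmin ≤ lam i) (hmem : ∃ i, lam i = lmin) :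
    ((2 / lmin) • Gweight d r - Fquantum d r hr lam).PosSemidef :=
  quantum_fisher_le_weight_general d r hr lam hpos lmin hlb hmem
end
end

section
/- In the single-qubit model with 0 < λ₂ < 1/2, the mean over uniformly random measurement settings of the diagonal–diagonal Fisher element satisfies Ī^{dd}(λ₂) := (1/4π) ∫₀^{2π} ∫₀^π [4cos²θ / (1 − (1−2λ₂)²·cos²θ)]·sin θ dθ dφ = (2·ln(2(1−λ₂)) − 2·ln(2λ₂))/(1−2λ₂)³ − 4/(1−2λ₂)². -/
/-!
With `a = 1 - 2λ₂`, the integrand does not depend on `φ`, and in `θ` it is `g(cos θ) sin θ` with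
`g(u) = 4u²/(1 - a²u²) = -4/a² + (2/a²)(1/(1 - au) + 1/(1 + au))`, so it has the explicit
primitive `fisherDDPrimitive a` built from `log (1 ∓ a cos θ)`.
-/

open Real intervalIntegral

noncomputable def fisherDDPrimitive (a x : ℝ) : ℝ :=
  (2 / a ^ 3) * (log (1 - a * cos x) - log (1 + a * cos x)) + 4 * cos x / a ^ 2

lemma abs_mul_cos_lt_one {a : ℝ} (ha : |a| < 1) (x : ℝ) : |a * cos x| < 1 := by
  rw [abs_mul]
  calc |a| * |cos x| ≤ |a| * 1 := by gcongr; exact abs_cos_le_one x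
    _ < 1 := by linarith

lemma one_sub_sq_mul_cos_sq_ne_zero {a : ℝ} (ha : |a| < 1) (x : ℝ) :
    1 - a ^ 2 * cos x ^ 2 ≠ 0 := by
  have h := abs_lt.mp (abs_mul_cos_lt_one ha x)
  have hfac : 1 - a ^ 2 * cos x ^ 2 = (1 - a * cos x) * (1 + a * cos x) := by ring
  rw [hfac]
  exact mul_ne_zero (by linarith) (by linarith)

lemma hasDerivAt_fisherDDPrimitive {a : ℝ} (ha0 : a ≠ 0) (ha : |a| < 1) (x : ℝ) :
    HasDerivAt (fisherDDPrimitive a)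
      (4 * cos x ^ 2 / (1 - a ^ 2 * cos x ^ 2) * sin x) x := by
  have hbound := abs_lt.mp (abs_mul_cos_lt_one ha x)
  have hcos : HasDerivAt (fun x ↦ a * cos x) (a * -sin x) x := (hasDerivAt_cos x).const_mul a
  have hminus := (hcos.const_sub 1).log (by linarith)
  have hplus := (hcos.const_add 1).log (by linarith)
  have hlin := ((hasDerivAt_cos x).const_mul 4).div_const (a ^ 2)
  refine (((hminus.sub hplus).const_mul (2 / a ^ 3)).add hlin).congr_deriv ?_
  have hminus_ne : 1 - a * cos x ≠ 0 := by linarith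
  have hplus_ne : 1 + a * cos x ≠ 0 := by linarith
  have hden := one_sub_sq_mul_cos_sq_ne_zero ha x
  field_simp
  ring

lemma integral_fisher_dd_mul_sin {a : ℝ} (ha0 : a ≠ 0) (ha : |a| < 1) :
    ∫ θ in (0 : ℝ)..π, 4 * cos θ ^ 2 / (1 - a ^ 2 * cos θ ^ 2) * sin θ
      = 4 / a ^ 3 * (log (1 + a) - log (1 - a)) - 8 / a ^ 2 := by
  have hcont : Continuous fun θ ↦ 4 * cos θ ^ 2 / (1 - a ^ 2 * cos θ ^ 2) * sin θ := by
    have := one_sub_sq_mul_cos_sq_ne_zero ha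
    fun_prop (disch := assumption)
  rw [integral_eq_sub_of_hasDerivAt (fun x _ ↦ hasDerivAt_fisherDDPrimitive ha0 ha x)
    (hcont.intervalIntegrable _ _)]
  simp only [fisherDDPrimitive, cos_pi, cos_zero]
  ring_nf

/-- the mean over uniformly random settings of the diagonal–diagonal Fisher
element: `(1/4π)·∫₀^{2π}∫₀^π [4cos²θ/(1−(1−2λ₂)²cos²θ)]·sinθ dθ dφ
  = (2 ln(2(1−λ₂)) − 2 ln(2λ₂))/(1−2λ₂)³ − 4/(1−2λ₂)²`. -/
theorem mean_fisher_dd (l : ℝ) (hl : 0 < l) (hl2 : l < 1 / 2) :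
    (1 / (4 * Real.pi)) *
        ∫ φ in (0 : ℝ)..(2 * Real.pi), ∫ θ in (0 : ℝ)..Real.pi,
          (4 * Real.cos θ ^ 2 / (1 - (1 - 2 * l) ^ 2 * Real.cos θ ^ 2)) * Real.sin θ
      = (2 * Real.log (2 * (1 - l)) - 2 * Real.log (2 * l)) / (1 - 2 * l) ^ 3
          - 4 / (1 - 2 * l) ^ 2 := by
  have ha0 : 1 - 2 * l ≠ 0 := by linarith
  have ha : |1 - 2 * l| < 1 := abs_lt.mpr ⟨by linarith, by linarith⟩
  have hlog_plus : log (2 * (1 - l)) = log (1 + (1 - 2 * l)) := by congr 1; ring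
  have hlog_minus : log (2 * l) = log (1 - (1 - 2 * l)) := by congr 1; ring
  rw [integral_fisher_dd_mul_sin ha0 ha, integral_const, smul_eq_mul, hlog_plus, hlog_minus]
  field_simp
  ring
end

section
/- In the single-qubit model with 0 < λ₂ < 1/2, the mean over uniformly random measurement settings of the real–real Fisher element satisfies Ī^{rr}(λ₂) := (1/4π) ∫₀^{2π} ∫₀^π [4cos²φ·sin²θ / (1 − (1−2λ₂)²·cos²θ)]·sin θ dθ dφ = (ln(2(1−λ₂)) − ln(2λ₂))/(1−2λ₂) − Ī^{dd}(λ₂)/2, where Ī^{dd}(λ₂) = (2·ln(2(1−λ₂)) − 2·ln(2λ₂))/(1−2λ₂)³ − 4/(1−2λ₂)²; the same value is obtained for the imaginary–imaginary element Ī^{ii}(λ₂), in which cos²φ is replaced by sin²φ. -/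
/-!
Both integrands factor as a function of `φ` times a function of `θ`. The `φ`-factor
`cos² φ` or `sin² φ` integrates to `π` over a full period. Writing `a = 1 - 2λ₂`, the `θ`-factor
`sin³ θ / (1 - a² cos² θ)` has the elementary antiderivative
`-cos θ / a² + (1 - a²)/(2a³) · (log (1 + a cos θ) - log (1 - a cos θ))`, from the partial
fractions `(1 - u²)/(1 - a²u²) = 1/a² - (1 - a²)/a² · 1/(1 - a²u²)` in `u = cos θ`.
Since `1 + a = 2(1 - λ₂)` and `1 - a = 2λ₂`, the stated closed form is the resulting value rewritten.
-/

open Real intervalIntegral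

section
variable {a : ℝ}

lemma one_add_mul_cos_pos (ha : |a| < 1) (x : ℝ) : 0 < 1 + a * cos x := by
  have : |a * cos x| < 1 := by
    rw [abs_mul]
    nlinarith [abs_cos_le_one x, abs_nonneg a, abs_nonneg (cos x)]
  linarith [neg_abs_le (a * cos x)]

lemma one_sub_mul_cos_pos (ha : |a| < 1) (x : ℝ) : 0 < 1 - a * cos x := by
  simpa [sub_eq_add_neg] using one_add_mul_cos_pos (a := -a) (by rwa [abs_neg]) x

lemma one_sub_sq_mul_cos_sq_pos (ha : |a| < 1) (x : ℝ) : 0 < 1 - a ^ 2 * cos x ^ 2 := by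
  have h : 1 - a ^ 2 * cos x ^ 2 = (1 + a * cos x) * (1 - a * cos x) := by ring
  rw [h]
  exact mul_pos (one_add_mul_cos_pos ha x) (one_sub_mul_cos_pos ha x)

lemma hasDerivAt_antideriv_sin_sq_div_one_sub_sq_mul_cos_sq (ha : a ≠ 0) (ha1 : |a| < 1)
    (x : ℝ) :
    HasDerivAt
      (fun θ => -cos θ / a ^ 2 +
        (1 - a ^ 2) / (2 * a ^ 3) * (log (1 + a * cos θ) - log (1 - a * cos θ)))
      (sin x ^ 2 / (1 - a ^ 2 * cos x ^ 2) * sin x) x := by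
  have hcos := hasDerivAt_cos x
  have hplus := ((hcos.const_mul a).const_add 1).log (one_add_mul_cos_pos ha1 x).ne'
  have hminus := ((hcos.const_mul a).const_sub 1).log (one_sub_mul_cos_pos ha1 x).ne'
  refine ((hcos.neg.div_const _).add ((hplus.sub hminus).const_mul _)).congr_deriv ?_
  rw [sin_sq x]
  field_simp [(one_sub_sq_mul_cos_sq_pos ha1 x).ne', (one_add_mul_cos_pos ha1 x).ne',
    (one_sub_mul_cos_pos ha1 x).ne']
  ring

lemma integral_sin_sq_div_one_sub_sq_mul_cos_sq_mul_sin (ha : a ≠ 0) (ha1 : |a| < 1) :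
    ∫ θ in (0 : ℝ)..π, sin θ ^ 2 / (1 - a ^ 2 * cos θ ^ 2) * sin θ
      = 2 / a ^ 2 - (1 - a ^ 2) / a ^ 3 * (log (1 + a) - log (1 - a)) := by
  have hcont : Continuous fun θ => sin θ ^ 2 / (1 - a ^ 2 * cos θ ^ 2) * sin θ := by
    refine (Continuous.div (by fun_prop) (by fun_prop) fun θ => ?_).mul continuous_sin
    exact (one_sub_sq_mul_cos_sq_pos ha1 θ).ne'
  rw [integral_eq_sub_of_hasDerivAt
    (fun x _ => hasDerivAt_antideriv_sin_sq_div_one_sub_sq_mul_cos_sq ha ha1 x)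
    (hcont.intervalIntegrable _ _)]
  simp only [cos_pi, cos_zero, mul_neg, mul_one, sub_neg_eq_add, ← sub_eq_add_neg]
  field_simp
  ring

end

lemma integral_cos_sq_zero_two_pi : ∫ φ in (0 : ℝ)..2 * π, cos φ ^ 2 = π := by
  simp [integral_cos_sq]

lemma integral_sin_sq_zero_two_pi : ∫ φ in (0 : ℝ)..2 * π, sin φ ^ 2 = π := by
  simp [integral_sin_sq]

lemma mean_fisher_of_integral_eq_pi {g : ℝ → ℝ} (hg : ∫ φ in (0 : ℝ)..2 * π, g φ = π)
    {a : ℝ} (ha : a ≠ 0) (ha1 : |a| < 1) :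
    (1 / (4 * π)) * ∫ φ in (0 : ℝ)..2 * π, ∫ θ in (0 : ℝ)..π,
        (4 * g φ * sin θ ^ 2 / (1 - a ^ 2 * cos θ ^ 2)) * sin θ
      = 2 / a ^ 2 - (1 - a ^ 2) / a ^ 3 * (log (1 + a) - log (1 - a)) := by
  have hinner : ∀ φ, ∫ θ in (0 : ℝ)..π, (4 * g φ * sin θ ^ 2 / (1 - a ^ 2 * cos θ ^ 2)) * sin θ
      = (4 * (2 / a ^ 2 - (1 - a ^ 2) / a ^ 3 * (log (1 + a) - log (1 - a)))) * g φ := by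
    intro φ
    simp_rw [mul_assoc 4 (g φ), mul_div_assoc, mul_assoc]
    rw [integral_const_mul, integral_const_mul,
      ← integral_sin_sq_div_one_sub_sq_mul_cos_sq_mul_sin ha ha1]
    ring
  simp_rw [hinner]
  rw [integral_const_mul, hg]
  field_simp [pi_ne_zero]

/-- the means over uniformly random settings of the real–real and
imaginary–imaginary Fisher elements:
`Ī^{rr}(λ₂) = Ī^{ii}(λ₂) = (ln(2(1−λ₂)) − ln(2λ₂))/(1−2λ₂) − Ī^{dd}(λ₂)/2`, where
`Ī^{dd}(λ₂) = (2 ln(2(1−λ₂)) − 2 ln(2λ₂))/(1−2λ₂)³ − 4/(1−2λ₂)²`. -/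
theorem mean_fisher_rr_ii (l : ℝ) (hl : 0 < l) (hl2 : l < 1 / 2) :
    ((1 / (4 * Real.pi)) *
        ∫ φ in (0 : ℝ)..(2 * Real.pi), ∫ θ in (0 : ℝ)..Real.pi,
          (4 * Real.cos φ ^ 2 * Real.sin θ ^ 2 / (1 - (1 - 2 * l) ^ 2 * Real.cos θ ^ 2)) *
            Real.sin θ
      = (Real.log (2 * (1 - l)) - Real.log (2 * l)) / (1 - 2 * l)
          - ((2 * Real.log (2 * (1 - l)) - 2 * Real.log (2 * l)) / (1 - 2 * l) ^ 3
              - 4 / (1 - 2 * l) ^ 2) / 2) ∧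
    ((1 / (4 * Real.pi)) *
        ∫ φ in (0 : ℝ)..(2 * Real.pi), ∫ θ in (0 : ℝ)..Real.pi,
          (4 * Real.sin φ ^ 2 * Real.sin θ ^ 2 / (1 - (1 - 2 * l) ^ 2 * Real.cos θ ^ 2)) *
            Real.sin θ
      = (Real.log (2 * (1 - l)) - Real.log (2 * l)) / (1 - 2 * l)
          - ((2 * Real.log (2 * (1 - l)) - 2 * Real.log (2 * l)) / (1 - 2 * l) ^ 3
              - 4 / (1 - 2 * l) ^ 2) / 2) := by
  have ha : 1 - 2 * l ≠ 0 := by linarith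
  have ha1 : |1 - 2 * l| < 1 := abs_lt.mpr ⟨by linarith, by linarith⟩
  have hclosed : (log (2 * (1 - l)) - log (2 * l)) / (1 - 2 * l)
        - ((2 * log (2 * (1 - l)) - 2 * log (2 * l)) / (1 - 2 * l) ^ 3
            - 4 / (1 - 2 * l) ^ 2) / 2
      = 2 / (1 - 2 * l) ^ 2 - (1 - (1 - 2 * l) ^ 2) / (1 - 2 * l) ^ 3 *
          (log (1 + (1 - 2 * l)) - log (1 - (1 - 2 * l))) := by
    rw [show 1 + (1 - 2 * l) = 2 * (1 - l) by ring, show 1 - (1 - 2 * l) = 2 * l by ring]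
    field_simp
    ring
  rw [hclosed]
  exact ⟨mean_fisher_of_integral_eq_pi integral_cos_sq_zero_two_pi ha ha1,
    mean_fisher_of_integral_eq_pi integral_sin_sq_zero_two_pi ha ha1⟩
end
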